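/- In the planted clique model with parameters n, k, Q (n ≥ 2, 1 ≤ k ≤ n), the probability that there exists a vertex u ∉ Q with deg(u) > (n−1)/2 + √(n·ln n) is at most 1/n. -/

import Mathlib

/-!
For a vertex `u ∉ Q` every pair `{u, v}` is free, so `deg u` counts the heads among `n - 1`
independent fair coins. Hoeffding's inequality bounds the probability that it exceeds
`(n - 1)/2 + ε` by `exp (-2 ε² / (n - 1))`, which is at most `n⁻²` for `ε² = n log n`;
a union bound over the at most `n` vertices outside `Q` gives `1/n`.
-/

open MeasureTheory

namespace Stmt3

noncomputable section
open scoped Classical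

variable {n : ℕ}

/-- Both endpoints of the unordered pair `p` lie in `Q`. -/
def BothInQ (Q : Finset (Fin n)) (p : Sym2 (Fin n)) : Prop := ∀ x ∈ p, x ∈ Q

/-- Index type: unordered pairs of distinct vertices not both lying in `Q`
(the "remaining pairs", whose edge-status is random). -/
def FreePair (n : ℕ) (Q : Finset (Fin n)) : Type :=
  {p : Sym2 (Fin n) // ¬ p.IsDiag ∧ ¬ BothInQ Q p}

instance (n : ℕ) (Q : Finset (Fin n)) : Fintype (FreePair n Q) := by
  unfold FreePair; infer_instance

/-- Sample space of the planted clique model: one Boolean for each free pair. -/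
def Ω (n : ℕ) (Q : Finset (Fin n)) : Type := FreePair n Q → Bool

instance (n : ℕ) (Q : Finset (Fin n)) : MeasurableSpace (Ω n Q) := MeasurableSpace.pi

/-- The Bernoulli(1/2) measure on `Bool`. -/
def bernoulliHalf : Measure Bool := (PMF.bernoulli (1 / 2) (by norm_num)).toMeasure

instance : IsProbabilityMeasure bernoulliHalf := PMF.toMeasure.isProbabilityMeasure _

/-- The planted clique measure: each remaining pair is an edge independently w.p. 1/2. -/
def plantedClique (n : ℕ) (Q : Finset (Fin n)) : Measure (Ω n Q) :=
  Measure.pi fun _ => bernoulliHalf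

/-- `u` and `v` are adjacent in the planted clique graph: they are distinct, and
either both lie in `Q` (a planted clique edge) or else the coin of the pair `{u,v}`
came up `true`. -/
def Adj (Q : Finset (Fin n)) (ω : Ω n Q) (u v : Fin n) : Prop :=
  ∃ hne : u ≠ v,
    BothInQ Q s(u, v) ∨
      ∃ h : ¬ BothInQ Q s(u, v),
        ω ⟨s(u, v), ⟨fun hd => hne (Sym2.mk_isDiag_iff.mp hd), h⟩⟩ = true

/-- Degree of vertex `v` in the planted clique graph: its number of neighbors. -/
def deg (Q : Finset (Fin n)) (ω : Ω n Q) (v : Fin n) : ℕ :=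
  (Finset.univ.filter fun u : Fin n => Adj Q ω u v).card

end

open Finset ProbabilityTheory Real

lemma integral_bernoulliHalf (f : Bool → ℝ) :
    ∫ b, f b ∂bernoulliHalf = (f true + f false) / 2 := by
  rw [bernoulliHalf, PMF.integral_eq_sum]
  norm_num [PMF.bernoulli_apply]
  ring

/-- Hoeffding's inequality for fair coins. -/
lemma measure_card_filter_ge_le {ι : Type*} [Fintype ι] (s : Finset ι) {ε : ℝ} (hε : 0 ≤ ε) :
    (Measure.pi fun _ : ι => bernoulliHalf) {ω | (#s : ℝ) / 2 + ε ≤ #{i ∈ s | ω i}} ≤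
      ENNReal.ofReal (exp (-2 * ε ^ 2 / #s)) := by
  set μ := Measure.pi fun _ : ι => bernoulliHalf
  let Y : Bool → ℝ := fun b => if b then 1 / 2 else -1 / 2
  have hY : ∀ ω : ι → Bool, ∑ i ∈ s, Y (ω i) = #{i ∈ s | ω i} - (#s : ℝ) / 2 := by
    intro ω
    rw [Finset.card_filter, Nat.cast_sum, Finset.card_eq_sum_ones, Nat.cast_sum, Finset.sum_div,
      ← Finset.sum_sub_distrib]
    refine Finset.sum_congr rfl fun i _ => ?_
    cases ω i <;> norm_num [Y]
  have hindep : iIndepFun (fun i ω => Y (ω i)) μ :=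
    iIndepFun_pi fun _ => (measurable_of_countable Y).aemeasurable
  have hsubG : ∀ i ∈ s, HasSubgaussianMGF (fun ω => Y (ω i)) (1 / 4) μ := by
    intro i _
    have hmean : ∫ ω, Y (ω i) ∂μ = 0 := by
      rw [integral_comp_eval (measurable_of_countable Y).aestronglyMeasurable,
        integral_bernoulliHalf]
      norm_num [Y]
    convert hasSubgaussianMGF_of_mem_Icc_of_integral_eq_zero (a := -1 / 2) (b := 1 / 2)
      (measurable_of_countable (fun ω : ι → Bool => Y (ω i))).aemeasurable
      (ae_of_all _ fun ω => by cases ω i <;> norm_num [Y]) hmean using 1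
    ext
    norm_num [nnnorm_of_nonneg]
  have hset : {ω : ι → Bool | (#s : ℝ) / 2 + ε ≤ #{i ∈ s | ω i}} =
      {ω | ε ≤ ∑ i ∈ s, Y (ω i)} := by
    ext ω
    simp only [Set.mem_ofPred_eq, hY]
    constructor <;> intro h <;> linarith
  rw [hset, ← ofReal_measureReal]
  refine ENNReal.ofReal_le_ofReal
    ((HasSubgaussianMGF.measure_sum_ge_le_of_iIndepFun hindep hsubG hε).trans_eq ?_)
  rw [NNReal.coe_sum, Finset.sum_const, nsmul_eq_mul]
  push_cast
  ring_nf

lemma exp_neg_two_mul_mul_log_div_le {x : ℝ} (hx : 1 < x) :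
    exp (-2 * (x * log x) / (x - 1)) ≤ 1 / x ^ 2 := by
  have hlog : 0 ≤ log x := log_nonneg hx.le
  have hexponent : -2 * (x * log x) / (x - 1) ≤ -log (x ^ 2) := by
    rw [log_pow, div_le_iff₀ (by linarith)]
    push_cast
    nlinarith
  calc exp (-2 * (x * log x) / (x - 1)) ≤ exp (-log (x ^ 2)) := exp_le_exp.mpr hexponent
    _ = 1 / x ^ 2 := by rw [exp_neg, exp_log (by positivity), one_div]

variable {n : ℕ} {Q : Finset (Fin n)}

def incidentPair {u : Fin n} (hu : u ∉ Q) : {v // v ≠ u} ↪ FreePair n Q where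
  toFun v := ⟨s(v.1, u), fun hd => v.2 (Sym2.mk_isDiag_iff.mp hd),
    fun hboth => hu (hboth u (Sym2.mem_mk_right _ _))⟩
  inj' _ _ h := Subtype.ext (Sym2.congr_left.mp (congrArg Subtype.val h))

lemma deg_eq_card_filter_incidentPair {u : Fin n} (hu : u ∉ Q) (ω : Ω n Q) :
    deg Q ω u = #{v | ω (incidentPair hu v)} := by
  classical
  have hbothInQ : ∀ v, ¬ BothInQ Q s(v, u) := fun v hboth => hu (hboth u (Sym2.mem_mk_right _ _))
  symm
  refine Finset.card_bij (fun v _ => v.1) ?_ (fun _ _ _ _ => Subtype.ext) ?_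
  · intro v hv
    simp only [Finset.mem_filter, Finset.mem_univ, true_and] at hv ⊢
    exact ⟨v.2, Or.inr ⟨hbothInQ v, hv⟩⟩
  · intro v hv
    obtain ⟨hne, hboth | ⟨_, hω⟩⟩ := (Finset.mem_filter.mp hv).2
    · exact absurd hboth (hbothInQ v)
    · exact ⟨⟨v, hne⟩, Finset.mem_filter.mpr ⟨mem_univ _, hω⟩, rfl⟩

lemma plantedClique_deg_ge_le {u : Fin n} (hu : u ∉ Q) {ε : ℝ} (hε : 0 ≤ ε) :
    plantedClique n Q {ω | ((n : ℝ) - 1) / 2 + ε ≤ deg Q ω u} ≤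
      ENNReal.ofReal (exp (-2 * ε ^ 2 / ((n : ℝ) - 1))) := by
  have hcard : (Fintype.card {v // v ≠ u} : ℝ) = (n : ℝ) - 1 := by
    rw [Fintype.card_subtype_compl, Fintype.card_fin, Fintype.card_unique,
      Nat.cast_pred (Fin.pos u)]
  have h := measure_card_filter_ge_le (univ.map (incidentPair hu)) hε
  simp only [card_map, card_univ, hcard, filter_map, Function.comp_def] at h
  simp only [deg_eq_card_filter_incidentPair hu]
  exact h

theorem nonclique_vertex_degree_upper_general (n : ℕ) (hn : 2 ≤ n)
    (Q : Finset (Fin n)) :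
    plantedClique n Q {ω : Ω n Q | ∃ u ∉ Q,
        ((n : ℝ) - 1) / 2 + Real.sqrt (n * Real.log n) < (deg Q ω u : ℝ)} ≤
      ENNReal.ofReal (1 / n) := by
  have hn1 : (1 : ℝ) < n := by exact_mod_cast hn
  set t := √(n * log n)
  have hvertex : ∀ u ∉ Q,
      plantedClique n Q {ω | ((n : ℝ) - 1) / 2 + t < deg Q ω u} ≤ ENNReal.ofReal (1 / n ^ 2) := by
    intro u hu
    refine (measure_mono (Set.ofPred_subset_ofPred.mpr fun _ => le_of_lt)).trans <|
      (plantedClique_deg_ge_le hu (sqrt_nonneg _)).trans (ENNReal.ofReal_le_ofReal ?_)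
    rw [sq_sqrt (by positivity)]
    exact exp_neg_two_mul_mul_log_div_le hn1
  calc _ ≤ ∑ u ∈ Qᶜ, plantedClique n Q {ω | ((n : ℝ) - 1) / 2 + t < deg Q ω u} := by
        refine (measure_mono ?_).trans (measure_biUnion_finset_le _ _)
        rintro ω ⟨u, hu, hω⟩
        exact Set.mem_biUnion (mem_compl.mpr hu) hω
    _ ≤ ∑ _u : Fin n, ENNReal.ofReal (1 / n ^ 2) :=
        (sum_le_sum fun u hu => hvertex u (mem_compl.mp hu)).trans
          (sum_le_sum_of_subset (subset_univ _))
    _ = ENNReal.ofReal (1 / n) := by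
        rw [sum_const, card_univ, Fintype.card_fin, nsmul_eq_mul, ← ENNReal.ofReal_natCast,
          ← ENNReal.ofReal_mul (by positivity)]
        congr 1
        field_simp

theorem nonclique_vertex_degree_upper (n k : ℕ) (hn : 2 ≤ n) (hk1 : 1 ≤ k) (hkn : k ≤ n)
    (Q : Finset (Fin n)) (hQ : Q.card = k) :
    plantedClique n Q {ω : Ω n Q | ∃ u ∉ Q,
        ((n : ℝ) - 1) / 2 + Real.sqrt (n * Real.log n) < (deg Q ω u : ℝ)} ≤
      ENNReal.ofReal (1 / n) :=
  nonclique_vertex_degree_upper_general n hn Q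

end Stmt3
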